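/- arXiv:2210.13038 — 4 statements merged into one kernel-verified Lean document; each statement's English description precedes it below -/
import Mathlib

section
/- Let T:[0,1]→[0,1] be continuous and suppose that for every N it admits a horseshoe of order N. Then for all k,ℓ ∈ ℕ, every total strict order ≺ on the symbols (s_i^j) with 1 ≤ i ≤ k, 0 ≤ j ≤ ℓ is realized by k orbits of length ℓ+1 of T: there exist x₁,…,x_k ∈ [0,1] such that s_i^j ≺ s_{i'}^{j'} if and only if T^j(x_i) < T^{j'}(x_{i'}), for all i,i',j,j'. -/
/-!
Give each symbol its rank in the order `≺`, and pick `k(ℓ+1)` intervals of a horseshoe of order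
`2k(ℓ+1)` that are strictly separated and increasing. Because every horseshoe interval covers every
other one, any finite itinerary through the horseshoe is followed by some orbit (pull back one
step at a time). Let the orbit of `xᵢ` visit, at time `j`, the interval labelled by the rank of
`sᵢʲ`; then the order of the points `Tʲ(xᵢ)` is that of the ranks, which is `≺`.
-/

open Set

section Itinerary

variable {α ι : Type*} {T : α → α} {I : ι → Set α}

lemma subset_image_iterate_itinerary (hcov : ∀ i j, I j ⊆ T '' I i) (m : ℕ) (w : ℕ → ι) :
    I (w m) ⊆ T^[m] '' {x | ∀ j ≤ m, T^[j] x ∈ I (w j)} := by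
  induction m generalizing w with
  | zero =>
    intro y hy
    exact ⟨y, fun j hj => by rwa [Nat.le_zero.1 hj], rfl⟩
  | succ m ih =>
    intro y hy
    obtain ⟨z, hz, rfl⟩ := ih (w ∘ Nat.succ) hy
    obtain ⟨x, hx, rfl⟩ := hcov (w 0) (w 1) (hz 0 m.zero_le)
    refine ⟨x, fun j hj => ?_, Function.iterate_succ_apply T m x⟩
    cases j with
    | zero => exact hx
    | succ j => exact hz j (Nat.succ_le_succ_iff.1 hj)

lemma exists_iterate_mem_of_covering (hcov : ∀ i j, I j ⊆ T '' I i) (hne : ∀ i, (I i).Nonempty)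
    (w : ℕ → ι) (m : ℕ) : ∃ x, ∀ j ≤ m, T^[j] x ∈ I (w j) := by
  obtain ⟨y, hy⟩ := hne (w m)
  obtain ⟨x, hx, -⟩ := subset_image_iterate_itinerary hcov m w hy
  exact ⟨x, hx⟩

end Itinerary

section Separation

variable {α : Type*} [LinearOrder α] [DenselyOrdered α]

lemma le_of_disjoint_Ioo {a₁ b₁ a₂ b₂ : α} (h : Disjoint (Ioo a₁ b₁) (Ioo a₂ b₂))
    (ha : a₁ ≤ a₂) (h₂ : a₂ < b₂) : b₁ ≤ a₂ := by
  rw [Ioo_disjoint_Ioo, max_eq_right ha, min_le_iff] at h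
  exact h.resolve_right h₂.not_ge

/-- Taking every other interval in increasing order, consecutive chosen intervals are separated
by a whole interval of positive length. -/
lemma exists_separated_subfamily {M : ℕ} {a b : Fin (2 * M) → α} (hab : ∀ i, a i < b i)
    (hdisj : Pairwise fun i j => Disjoint (Ioo (a i) (b i)) (Ioo (a j) (b j))) :
    ∃ e : Fin M → Fin (2 * M), ∀ t t', t < t' → b (e t) < a (e t') := by
  set σ := Tuple.sort a
  have hsorted : ∀ u u', u < u' → b (σ u) ≤ a (σ u') := fun u u' h =>
    le_of_disjoint_Ioo (hdisj (σ.injective.ne h.ne)) (Tuple.monotone_sort a h.le) (hab _)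
  refine ⟨fun t => σ ⟨2 * t, by omega⟩, fun t t' htt' => ?_⟩
  have ht : (t : ℕ) < t' := htt'
  calc b (σ ⟨2 * t, _⟩) ≤ a (σ ⟨2 * t + 1, by omega⟩) := hsorted _ _ (by simp [Fin.lt_def])
    _ < b (σ ⟨2 * t + 1, by omega⟩) := hab _
    _ ≤ a (σ ⟨2 * t', _⟩) := hsorted _ _ (by simp only [Fin.lt_def]; omega)

end Separation

lemma exists_rank {α : Type*} [Fintype α] (r : α → α → Prop) [IsStrictTotalOrder α r] :
    ∃ f : α → Fin (Fintype.card α), ∀ s t, r s t → f s < f t := by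
  classical
  let := linearOrderOfSTO r
  exact ⟨(monoEquivOfFin α rfl).symm, fun _ _ h => (monoEquivOfFin α rfl).symm.strictMono h⟩

theorem orders_realized_by_orbits_general (T : ℝ → ℝ)
    (hhorse : ∀ N : ℕ, ∃ I : Fin N → Set ℝ,
      (∀ i, ∃ a b : ℝ, a < b ∧ 0 ≤ a ∧ b ≤ 1 ∧ I i = Icc a b) ∧
      (∀ i j, i ≠ j → interior (I i) ∩ interior (I j) = ∅) ∧
      (∀ i j, I j ⊆ T '' I i)) :
    ∀ (k ℓ : ℕ) (r : Fin k × Fin (ℓ + 1) → Fin k × Fin (ℓ + 1) → Prop),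
      IsStrictTotalOrder (Fin k × Fin (ℓ + 1)) r →
      ∃ x : Fin k → ℝ, (∀ i, x i ∈ Icc (0:ℝ) 1) ∧
        ∀ (i i' : Fin k) (j j' : Fin (ℓ + 1)),
          r (i, j) (i', j') ↔ T^[(j : ℕ)] (x i) < T^[(j' : ℕ)] (x i') := by
  intro k ℓ r _
  obtain ⟨rank, hrank⟩ := exists_rank r
  obtain ⟨I, hI, hdisj, hcov⟩ := hhorse (2 * Fintype.card (Fin k × Fin (ℓ + 1)))
  choose a b hab ha0 hb1 hIab using hI
  obtain rfl : I = fun i => Icc (a i) (b i) := funext hIab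
  obtain ⟨e, he⟩ := exists_separated_subfamily hab fun i j hij => by
    simpa [disjoint_iff_inter_eq_empty] using hdisj i j hij
  have horbit (i : Fin k) := exists_iterate_mem_of_covering hcov
    (fun _ => nonempty_Icc.2 (hab _).le) (fun j => e (rank (i, Fin.ofNat (ℓ + 1) j))) ℓ
  choose x hx using horbit
  have hmem (s : Fin k × Fin (ℓ + 1)) :
      T^[s.2] (x s.1) ∈ Icc (a (e (rank s))) (b (e (rank s))) := by
    simpa using hx s.1 s.2 (Fin.is_le s.2)
  have hmono (s t) (hst : r s t) : T^[s.2] (x s.1) < T^[t.2] (x t.1) :=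
    (hmem s).2.trans_lt ((he _ _ (hrank s t hst)).trans_le (hmem t).1)
  refine ⟨x, fun i => ?_, fun i i' j j' => (RelEmbedding.ofMonotone _ hmono).map_rel_iff.symm⟩
  exact Icc_subset_Icc (ha0 _) (hb1 _) (by simpa using hmem (i, 0))

/-- A continuous interval map with horseshoes of all orders realizes every total
strict order on k·(ℓ+1) symbols by k orbits of length ℓ+1. -/
theorem orders_realized_by_orbits (T : ℝ → ℝ)
    (hTc : ContinuousOn T (Icc 0 1)) (hTm : MapsTo T (Icc 0 1) (Icc 0 1))
    (hhorse : ∀ N : ℕ, ∃ I : Fin N → Set ℝ,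
      (∀ i, ∃ a b : ℝ, a < b ∧ 0 ≤ a ∧ b ≤ 1 ∧ I i = Icc a b) ∧
      (∀ i j, i ≠ j → interior (I i) ∩ interior (I j) = ∅) ∧
      (∀ i j, I j ⊆ T '' I i)) :
    ∀ (k ℓ : ℕ) (r : Fin k × Fin (ℓ + 1) → Fin k × Fin (ℓ + 1) → Prop),
      IsStrictTotalOrder (Fin k × Fin (ℓ + 1)) r →
      ∃ x : Fin k → ℝ, (∀ i, x i ∈ Icc (0:ℝ) 1) ∧
        ∀ (i i' : Fin k) (j j' : Fin (ℓ + 1)),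
          r (i, j) (i', j') ↔ T^[(j : ℕ)] (x i) < T^[(j' : ℕ)] (x i') :=
  orders_realized_by_orbits_general T hhorse
end

section
/- If a continuous map T:[0,1]→[0,1] admits a horseshoe of order k (k compact intervals I₁,…,I_k with pairwise disjoint interiors, T(I_i) ⊇ I_j for all i,j), then for every finite word (i₀,…,i_{n-1}) ∈ {1,…,k}ⁿ the set I_{i₀} ∩ T^{-1}(I_{i₁}) ∩ … ∩ T^{-(n-1)}(I_{i_{n-1}}) is a nonempty compact set. -/
open Set

/-- If `f` is continuous on `[u,v]` with `f u = c`, `f v = d`, `c ≤ d`, then some compact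
subinterval of `[u,v]` maps exactly onto `[c,d]`. -/
lemma horseshoe_sub_aux (f : ℝ → ℝ) (u v : ℝ) (huv : u ≤ v)
    (hf : ContinuousOn f (Icc u v)) (c d : ℝ) (hcd : c ≤ d)
    (hu : f u = c) (hv : f v = d) :
    ∃ a b, a ≤ b ∧ Icc a b ⊆ Icc u v ∧ f '' Icc a b = Icc c d := by
  set Sd : Set ℝ := Icc u v ∩ f ⁻¹' {d} with hSd
  have hSdc : IsClosed Sd := hf.preimage_isClosed_of_isClosed isClosed_Icc isClosed_singleton
  have hSdne : Sd.Nonempty := ⟨v, ⟨huv, le_refl v⟩, by simpa using hv⟩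
  have hSdbdd : BddBelow Sd := ⟨u, fun x hx => hx.1.1⟩
  set b' := sInf Sd with hb'
  have hb'mem : b' ∈ Sd := hSdc.csInf_mem hSdne hSdbdd
  have hub' : u ≤ b' := hb'mem.1.1
  have hb'v : b' ≤ v := hb'mem.1.2
  have hfb' : f b' = d := hb'mem.2
  set Sc : Set ℝ := Icc u b' ∩ f ⁻¹' {c} with hSc
  have hScc : IsClosed Sc :=
    (hf.mono (Icc_subset_Icc le_rfl hb'v)).preimage_isClosed_of_isClosed isClosed_Icc
      isClosed_singleton
  have hScne : Sc.Nonempty := ⟨u, ⟨le_refl u, hub'⟩, by simpa using hu⟩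
  have hScbdd : BddAbove Sc := ⟨b', fun x hx => hx.1.2⟩
  set a' := sSup Sc with ha'
  have ha'mem : a' ∈ Sc := hScc.csSup_mem hScne hScbdd
  have hua' : u ≤ a' := ha'mem.1.1
  have ha'b' : a' ≤ b' := ha'mem.1.2
  have hfa' : f a' = c := ha'mem.2
  have hsub : Icc a' b' ⊆ Icc u v := Icc_subset_Icc hua' (hb'v)
  refine ⟨a', b', ha'b', hsub, Subset.antisymm ?_ ?_⟩
  · rintro y ⟨x, hx, rfl⟩
    constructor
    · by_contra h
      push_neg at h
      have hxa' : a' < x := by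
        rcases lt_or_eq_of_le hx.1 with h' | h'
        · exact h'
        · exfalso; rw [← h', hfa'] at h; exact lt_irrefl c h
      have : c ∈ f '' Icc x b' := by
        apply intermediate_value_Icc hx.2 (hf.mono (Icc_subset_Icc (hua'.trans hx.1) hb'v))
        exact ⟨h.le, by rw [hfb']; exact hcd⟩
      obtain ⟨y, hy, hfy⟩ := this
      have : y ∈ Sc := ⟨⟨(hua'.trans hx.1).trans hy.1, hy.2⟩, by simpa using hfy⟩
      have : y ≤ a' := le_csSup hScbdd this
      linarith [hy.1]
    · by_contra h
      push_neg at h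
      have hxb' : x < b' := by
        rcases lt_or_eq_of_le hx.2 with h' | h'
        · exact h'
        · exfalso; rw [h', hfb'] at h; exact lt_irrefl d h
      have : d ∈ f '' Icc a' x := by
        apply intermediate_value_Icc hx.1 (hf.mono (Icc_subset_Icc hua' (hx.2.trans hb'v)))
        exact ⟨by rw [hfa']; exact hcd, h.le⟩
      obtain ⟨y, hy, hfy⟩ := this
      have : y ∈ Sd := ⟨⟨hua'.trans hy.1, (hy.2.trans hx.2).trans hb'v⟩, by simpa using hfy⟩
      have : b' ≤ y := csInf_le hSdbdd this
      linarith [hy.2]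
  · have := intermediate_value_Icc ha'b' (hf.mono hsub)
    rwa [hfa', hfb'] at this

/-- If `f` is continuous on `[A,B]` and `[c,d] ⊆ f '' [A,B]`, then some compact subinterval
of `[A,B]` maps exactly onto `[c,d]`. -/
lemma horseshoe_sub (f : ℝ → ℝ) (A B : ℝ)
    (hf : ContinuousOn f (Icc A B)) (c d : ℝ) (hcd : c ≤ d)
    (hsub : Icc c d ⊆ f '' Icc A B) :
    ∃ a b, a ≤ b ∧ Icc a b ⊆ Icc A B ∧ f '' Icc a b = Icc c d := by
  obtain ⟨u, hu, hfu⟩ := hsub (left_mem_Icc.2 hcd)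
  obtain ⟨v, hv, hfv⟩ := hsub (right_mem_Icc.2 hcd)
  rcases le_total u v with h | h
  · obtain ⟨a, b, hab, hsub', himg⟩ :=
      horseshoe_sub_aux f u v h (hf.mono (Icc_subset_Icc hu.1 hv.2)) c d hcd hfu hfv
    exact ⟨a, b, hab, hsub'.trans (Icc_subset_Icc hu.1 hv.2), himg⟩
  · -- reflect: g x = f (v + u - x)
    have hmaps : MapsTo (fun x => v + u - x) (Icc v u) (Icc v u) := by
      intro x hx
      simp only [mem_Icc] at hx ⊢
      constructor <;> linarith
    have hIccVU : Icc v u ⊆ Icc A B := Icc_subset_Icc hv.1 hu.2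
    have hg : ContinuousOn (fun x => f (v + u - x)) (Icc v u) :=
      (hf.mono hIccVU).comp ((continuous_const.sub continuous_id).continuousOn) hmaps
    obtain ⟨a, b, hab, hsub', himg⟩ :=
      horseshoe_sub_aux (fun x => f (v + u - x)) v u h hg c d hcd
        (by simpa using hfu) (by simpa using hfv)
    refine ⟨v + u - b, v + u - a, by linarith, ?_, ?_⟩
    · refine (Icc_subset_Icc ?_ ?_).trans hIccVU
      · linarith [(hsub' (right_mem_Icc.2 hab)).2]
      · linarith [(hsub' (left_mem_Icc.2 hab)).1]
    · have : (fun x => v + u - x) '' Icc a b = Icc (v + u - b) (v + u - a) :=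
        image_const_sub_Icc (v + u) a b
      rw [← this, ← image_comp]
      exact himg

/-- Key induction: every itinerary is realized on a nonempty compact interval whose last
iterate image is the full target interval. -/
lemma horseshoe_key (T : ℝ → ℝ)
    (hTc : ContinuousOn T (Icc 0 1)) (hTm : MapsTo T (Icc 0 1) (Icc 0 1))
    (k : ℕ) (I : Fin k → Set ℝ)
    (hI : ∀ i, ∃ a b : ℝ, a < b ∧ 0 ≤ a ∧ b ≤ 1 ∧ I i = Icc a b)
    (hcover : ∀ i j, I j ⊆ T '' I i) :
    ∀ (n : ℕ) (w : Fin (n + 1) → Fin k),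
      ∃ a b : ℝ, a ≤ b ∧ (∀ j : Fin (n + 1), T^[(j : ℕ)] '' Icc a b ⊆ I (w j)) ∧
        T^[n] '' Icc a b = I (w (Fin.last n)) := by
  intro n
  induction n with
  | zero =>
    intro w
    obtain ⟨a, b, hab, _, _, heq⟩ := hI (w 0)
    refine ⟨a, b, hab.le, ?_, ?_⟩
    · intro j
      have hj : j = 0 := Fin.ext (Nat.lt_one_iff.mp j.isLt)
      subst hj
      simp [heq]
    · have : Fin.last 0 = 0 := rfl
      simp [this, heq]
  | succ n ih =>
    intro w
    obtain ⟨a, b, hab, hsub, hlast⟩ := ih (fun j => w j.succ)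
    obtain ⟨A, B, hABlt, hA0, hB1, hIeq⟩ := hI (w 0)
    have hab1 : Icc a b ⊆ I (w 1) := by
      have := hsub 0
      simp only [Fin.val_zero, Function.iterate_zero, image_id] at this
      simpa [Fin.succ_zero_eq_one] using this
    have hcov : Icc a b ⊆ T '' Icc A B := by
      rw [← hIeq]; exact hab1.trans (hcover (w 0) (w 1))
    obtain ⟨a', b', hab', hsub', himg⟩ :=
      horseshoe_sub T A B (hTc.mono (Icc_subset_Icc hA0 hB1)) a b hab hcov
    refine ⟨a', b', hab', ?_, ?_⟩
    · intro j
      refine Fin.cases ?_ ?_ j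
      · simp only [Fin.val_zero, Function.iterate_zero, image_id]
        rw [hIeq]; exact hsub'
      · intro i
        have : T^[(i.succ : ℕ)] '' Icc a' b' = T^[(i : ℕ)] '' (T '' Icc a' b') := by
          rw [Fin.val_succ, Function.iterate_succ, image_comp]
        rw [this, himg]
        exact hsub i
    · have : T^[n + 1] '' Icc a' b' = T^[n] '' (T '' Icc a' b') := by
        rw [Function.iterate_succ, image_comp]
      rw [this, himg, hlast, Fin.succ_last]

/-- In a horseshoe of order k, every itinerary is realized on a nonempty compact set. -/
theorem horseshoe_itineraries (T : ℝ → ℝ)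
    (hTc : ContinuousOn T (Icc 0 1)) (hTm : MapsTo T (Icc 0 1) (Icc 0 1))
    (k : ℕ) (I : Fin k → Set ℝ)
    (hI : ∀ i, ∃ a b : ℝ, a < b ∧ 0 ≤ a ∧ b ≤ 1 ∧ I i = Icc a b)
    (hdisj : ∀ i j, i ≠ j → interior (I i) ∩ interior (I j) = ∅)
    (hcover : ∀ i j, I j ⊆ T '' I i) :
    ∀ (n : ℕ) (w : Fin (n + 1) → Fin k),
      (⋂ j : Fin (n + 1), T^[(j : ℕ)] ⁻¹' I (w j)).Nonempty ∧
      IsCompact (⋂ j : Fin (n + 1), T^[(j : ℕ)] ⁻¹' I (w j)) := by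
  intro n w
  have hIsub : ∀ i, I i ⊆ Icc 0 1 := by
    intro i
    obtain ⟨a, b, _, h0, h1, heq⟩ := hI i
    rw [heq]; exact Icc_subset_Icc h0 h1
  have hIclosed : ∀ i, IsClosed (I i) := by
    intro i
    obtain ⟨a, b, _, _, _, heq⟩ := hI i
    rw [heq]; exact isClosed_Icc
  have hiterC : ∀ m : ℕ, ContinuousOn (T^[m]) (Icc 0 1) := by
    intro m
    induction m with
    | zero => simpa using continuousOn_id
    | succ m ih =>
      rw [Function.iterate_succ]
      exact ih.comp hTc hTm
  constructor
  · obtain ⟨a, b, hab, hsub, _⟩ := horseshoe_key T hTc hTm k I hI hcover n w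
    refine ⟨a, mem_iInter.2 fun j => ?_⟩
    exact hsub j (mem_image_of_mem _ (left_mem_Icc.2 hab))
  · have hSeq : (⋂ j : Fin (n + 1), T^[(j : ℕ)] ⁻¹' I (w j))
        = ⋂ j : Fin (n + 1), (Icc (0:ℝ) 1 ∩ T^[(j : ℕ)] ⁻¹' I (w j)) := by
      ext x
      simp only [mem_iInter, mem_inter_iff]
      constructor
      · intro h j
        refine ⟨hIsub (w 0) ?_, h j⟩
        have := h 0
        simpa using this
      · intro h j
        exact (h j).2
    rw [hSeq]
    apply IsCompact.of_isClosed_subset (isCompact_Icc (a := (0:ℝ)) (b := 1))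
    · exact isClosed_iInter fun j =>
        (hiterC j).preimage_isClosed_of_isClosed isClosed_Icc (hIclosed (w j))
    · exact (iInter_subset _ 0).trans inter_subset_left
end

section
/- If T:[0,1]→[0,1] is a β-hypersensitive continuous map for some β ∈ (0,1), then the metric mean dimension of T relative to the Euclidean metric satisfies mdim_M(T,|·|) ≥ 1-β. -/
open Set Filter

/-- Maximal cardinality of an (n,ε)-separated subset of [0,1] for the map T
and the metric d. -/
noncomputable def sepN (d : ℝ → ℝ → ℝ) (T : ℝ → ℝ) (ε : ℝ) (n : ℕ) : ℕ :=
  sSup {m : ℕ | ∃ F : Finset ℝ, (↑F : Set ℝ) ⊆ Icc 0 1 ∧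
    (∀ x ∈ F, ∀ y ∈ F, x ≠ y → ∃ j < n, ε ≤ d (T^[j] x) (T^[j] y)) ∧ F.card = m}

/-- Metric mean dimension of T relative to the metric d:
liminf_{ε→0⁺} limsup_{n→∞} log N(d,T,ε,n) / (n log(1/ε)). -/
noncomputable def mdimM (T : ℝ → ℝ) (d : ℝ → ℝ → ℝ) : ℝ :=
  liminf (fun ε : ℝ =>
      limsup (fun n : ℕ => Real.log (sepN d T ε n) / (n * Real.log (1 / ε))) atTop)
    (nhdsWithin 0 (Ioi 0))

open MeasureTheory Topology

private lemma floor_scale_abs {ε a b : ℝ} (hε : 0 < ε) (ha : 0 ≤ a) (hb : 0 ≤ b)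
    (h : ⌊a / ε⌋₊ = ⌊b / ε⌋₊) : |a - b| < ε := by
  have h1 : a / ε < ⌊a / ε⌋₊ + 1 := Nat.lt_floor_add_one _
  have h2 : b / ε < ⌊b / ε⌋₊ + 1 := Nat.lt_floor_add_one _
  have h3 : (⌊a / ε⌋₊ : ℝ) ≤ a / ε := Nat.floor_le (by positivity)
  have h4 : (⌊b / ε⌋₊ : ℝ) ≤ b / ε := Nat.floor_le (by positivity)
  have h5 : ((⌊a / ε⌋₊ : ℝ)) = (⌊b / ε⌋₊ : ℝ) := by exact_mod_cast h
  have ha' : a / ε * ε = a := div_mul_cancel₀ a hε.ne'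
  have hb' : b / ε * ε = b := div_mul_cancel₀ b hε.ne'
  rw [abs_sub_lt_iff]
  constructor <;> nlinarith

private lemma sep_card_le {T : ℝ → ℝ} (hTm : MapsTo T (Icc 0 1) (Icc 0 1)) {ε : ℝ} (hε : 0 < ε)
    (n : ℕ) (F : Finset ℝ) (hF : (↑F : Set ℝ) ⊆ Icc 0 1)
    (hsep : ∀ x ∈ F, ∀ y ∈ F, x ≠ y → ∃ j < n, ε ≤ |T^[j] x - T^[j] y|) :
    F.card ≤ (⌊1/ε⌋₊ + 1) ^ n := by
  classical
  set K := ⌊1/ε⌋₊ with hK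
  have hiter : ∀ x ∈ F, ∀ j : ℕ, T^[j] x ∈ Icc (0:ℝ) 1 := fun x hx j => hTm.iterate j (hF hx)
  have hcode : ∀ x ∈ F, ∀ j : ℕ, ⌊T^[j] x / ε⌋₊ ≤ K := by
    intro x hx j
    have h2 := (hiter x hx j).2
    have h1 : T^[j] x / ε ≤ 1 / ε := by gcongr
    exact Nat.floor_mono h1
  set f : ℝ → (Fin n → Fin (K+1)) :=
    fun x j => ⟨min ⌊T^[j.val] x / ε⌋₊ K, Nat.lt_succ_of_le (min_le_right _ _)⟩ with hf
  have hinj : Set.InjOn f (↑F : Set ℝ) := by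
    intro x hx y hy hxy
    by_contra hne
    obtain ⟨j, hj, hjsep⟩ := hsep x hx y hy hne
    have hx1 := congrFun hxy ⟨j, hj⟩
    have hx2 : min ⌊T^[j] x / ε⌋₊ K = min ⌊T^[j] y / ε⌋₊ K := congrArg Fin.val hx1
    rw [min_eq_left (hcode x hx j), min_eq_left (hcode y hy j)] at hx2
    have := floor_scale_abs hε (hiter x hx j).1 (hiter y hy j).1 hx2
    linarith
  calc F.card ≤ (Finset.univ : Finset (Fin n → Fin (K+1))).card :=
        Finset.card_le_card_of_injOn f (fun a _ => Finset.mem_univ _) (by exact_mod_cast hinj)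
    _ = (K+1)^n := by simp [Fintype.card_fun]


private lemma sepN_bddAbove {T : ℝ → ℝ} (hTm : MapsTo T (Icc 0 1) (Icc 0 1)) {ε : ℝ}
    (hε : 0 < ε) (n : ℕ) :
    BddAbove {m : ℕ | ∃ F : Finset ℝ, (↑F : Set ℝ) ⊆ Icc 0 1 ∧
      (∀ x ∈ F, ∀ y ∈ F, x ≠ y → ∃ j < n,
        ε ≤ (fun x y => |x - y|) (T^[j] x) (T^[j] y)) ∧ F.card = m} := by
  refine ⟨(⌊1/ε⌋₊ + 1) ^ n, ?_⟩
  rintro m ⟨F, hF, hsep, rfl⟩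
  exact sep_card_le hTm hε n F hF hsep

private lemma sepN_le {T : ℝ → ℝ} (hTm : MapsTo T (Icc 0 1) (Icc 0 1)) {ε : ℝ}
    (hε : 0 < ε) (n : ℕ) :
    sepN (fun x y => |x - y|) T ε n ≤ (⌊1/ε⌋₊ + 1) ^ n := by
  refine csSup_le ⟨0, ⟨∅, by simp, by simp, by simp⟩⟩ ?_
  rintro m ⟨F, hF, hsep, rfl⟩
  exact sep_card_le hTm hε n F hF hsep

private lemma le_sepN {T : ℝ → ℝ} (hTm : MapsTo T (Icc 0 1) (Icc 0 1)) {ε : ℝ}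
    (hε : 0 < ε) (n : ℕ) (F : Finset ℝ) (hF : (↑F : Set ℝ) ⊆ Icc 0 1)
    (hsep : ∀ x ∈ F, ∀ y ∈ F, x ≠ y → ∃ j < n, ε ≤ |T^[j] x - T^[j] y|) :
    F.card ≤ sepN (fun x y => |x - y|) T ε n :=
  le_csSup (sepN_bddAbove hTm hε n) ⟨F, hF, hsep, rfl⟩

private lemma one_le_sepN {T : ℝ → ℝ} (hTm : MapsTo T (Icc 0 1) (Icc 0 1)) {ε : ℝ}
    (hε : 0 < ε) (n : ℕ) : 1 ≤ sepN (fun x y => |x - y|) T ε n := by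
  have := le_sepN hTm hε n {0} (by norm_num) ?_
  · simpa using this
  · intro x hx y hy hxy
    simp only [Finset.mem_singleton] at hx hy
    exact absurd (hx.trans hy.symm) hxy


private lemma construct {T : ℝ → ℝ} (hTc : ContinuousOn T (Icc 0 1))
    (hTm : MapsTo T (Icc 0 1) (Icc 0 1)) {C β ε : ℝ} (hC : 0 < C) (hε : 0 < ε)
    (hhyp : ∀ a b : ℝ, 0 ≤ a → a ≤ b → b ≤ 1 →
      C * (b - a) ^ β ≤ (volume (T '' Icc a b)).toReal)
    (n : ℕ) : ∀ p : ℝ, 0 ≤ p → p + ε ≤ 1 →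
    ∃ F : Finset ℝ, (↑F : Set ℝ) ⊆ Icc p (p+ε) ∧
      (∀ x ∈ F, ∀ y ∈ F, x ≠ y → ∃ j, 1 ≤ j ∧ j ≤ n ∧ ε ≤ |T^[j] x - T^[j] y|) ∧
      ⌊C * ε ^ β / (2*ε)⌋₊ ^ n ≤ F.card := by
  classical
  induction n with
  | zero =>
    intro p hp hp1
    refine ⟨{p}, ?_, ?_, by simp⟩
    · intro x hx
      simp only [Finset.coe_singleton, mem_singleton_iff] at hx
      subst hx; exact ⟨le_rfl, by linarith⟩
    · intro x hx y hy hxy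
      simp only [Finset.mem_singleton] at hx hy
      exact absurd (hx.trans hy.symm) hxy
  | succ n IH =>
    intro p hp hp1
    set M := ⌊C * ε ^ β / (2*ε)⌋₊ with hM
    have hεβ : 0 < ε ^ β := Real.rpow_pos_of_pos hε β
    have hpe : p ≤ p + ε := by linarith
    have hJsub : Icc p (p+ε) ⊆ Icc (0:ℝ) 1 := Icc_subset_Icc hp hp1
    have hTcJ : ContinuousOn T (Icc p (p+ε)) := hTc.mono hJsub
    have hSne : (T '' Icc p (p+ε)).Nonempty := ⟨T p, mem_image_of_mem _ (left_mem_Icc.2 hpe)⟩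
    have hScon : IsConnected (T '' Icc p (p+ε)) := ⟨hSne, isPreconnected_Icc.image T hTcJ⟩
    have hScomp : IsCompact (T '' Icc p (p+ε)) := isCompact_Icc.image_of_continuousOn hTcJ
    set u := sInf (T '' Icc p (p+ε)) with hu
    set v := sSup (T '' Icc p (p+ε)) with hv
    have hSeq : T '' Icc p (p+ε) = Icc u v := eq_Icc_of_connected_compact hScon hScomp
    have hSsub : T '' Icc p (p+ε) ⊆ Icc 0 1 := by
      rintro y ⟨x, hx, rfl⟩; exact hTm (hJsub hx)
    have huv : u ≤ v := by
      have h := hSne; rw [hSeq] at h; exact nonempty_Icc.mp h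
    have hu0 : 0 ≤ u := (hSsub (hSeq ▸ left_mem_Icc.2 huv)).1
    have hv1 : v ≤ 1 := (hSsub (hSeq ▸ right_mem_Icc.2 huv)).2
    have hlen : C * ε ^ β ≤ v - u := by
      have h := hhyp p (p+ε) hp hpe hp1
      rw [hSeq, Real.volume_Icc, ENNReal.toReal_ofReal (by linarith)] at h
      simpa using h
    have hMle : 2 * ε * (M:ℝ) ≤ C * ε ^ β := by
      have h1 : (M:ℝ) ≤ C * ε ^ β / (2*ε) := Nat.floor_le (by positivity)
      have h2 : 2 * ε * (C * ε ^ β / (2*ε)) = C * ε ^ β := by field_simp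
      nlinarith
    have hpre : ∀ y ∈ Icc u v, ∃ x, x ∈ Icc p (p+ε) ∧ T x = y := by
      intro y hy
      have : y ∈ T '' Icc p (p+ε) := hSeq ▸ hy
      rcases this with ⟨x, hx, hxy⟩
      exact ⟨x, hx, hxy⟩
    choose! s hs1 hs2 using hpre
    have hKsub : ∀ i : Fin M, 0 ≤ u + 2*ε*(i:ℕ) ∧ (u + 2*ε*(i:ℕ)) + ε ≤ 1 ∧
        Icc (u + 2*ε*(i:ℕ)) (u + 2*ε*(i:ℕ) + ε) ⊆ Icc u v := by
      intro i
      have hiM : ((i:ℕ):ℝ) + 1 ≤ (M:ℝ) := by exact_mod_cast i.2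
      have hi0 : (0:ℝ) ≤ ((i:ℕ):ℝ) := Nat.cast_nonneg _
      have h1 : 2*ε*(i:ℕ) + ε ≤ v - u := by nlinarith
      exact ⟨by positivity, by linarith, Icc_subset_Icc (by nlinarith) (by linarith)⟩
    have key : ∀ i : Fin M, ∃ F : Finset ℝ,
        (↑F : Set ℝ) ⊆ Icc (u + 2*ε*(i:ℕ)) (u + 2*ε*(i:ℕ) + ε) ∧
        (∀ x ∈ F, ∀ y ∈ F, x ≠ y → ∃ j, 1 ≤ j ∧ j ≤ n ∧ ε ≤ |T^[j] x - T^[j] y|) ∧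
        M ^ n ≤ F.card :=
      fun i => IH (u + 2*ε*(i:ℕ)) (hKsub i).1 (hKsub i).2.1
    choose G hG1 hG2 hG3 using key
    have hgap : ∀ i j : Fin M, (i:ℕ) < (j:ℕ) → ∀ a b : ℝ, a ∈ (G i : Set ℝ) → b ∈ (G j : Set ℝ) →
        a + ε ≤ b := by
      intro i j hij a b ha hb
      have ha' := hG1 i ha
      have hb' := hG1 j hb
      have hc : ((i:ℕ):ℝ) + 1 ≤ ((j:ℕ):ℝ) := by exact_mod_cast hij
      have h1 := ha'.2
      have h2 := hb'.1
      nlinarith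
    have hmemI : ∀ i : Fin M, ∀ a ∈ (G i : Set ℝ), a ∈ Icc u v :=
      fun i a ha => (hKsub i).2.2 (hG1 i ha)
    have hdisj : ∀ i j : Fin M, i ≠ j → Disjoint (G i) (G j) := by
      intro i j hij
      rw [Finset.disjoint_left]
      intro a hai haj
      rcases lt_or_gt_of_ne (fun h : (i:ℕ) = (j:ℕ) => hij (Fin.ext h)) with h | h
      · have := hgap i j h a a (by exact_mod_cast hai) (by exact_mod_cast haj); linarith
      · have := hgap j i h a a (by exact_mod_cast haj) (by exact_mod_cast hai); linarith
    have hinj : Set.InjOn s (↑(Finset.univ.biUnion G) : Set ℝ) := by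
      intro a ha b hb hab
      rw [Finset.coe_biUnion] at ha hb
      simp only [mem_iUnion] at ha hb
      obtain ⟨i, _, hai⟩ := ha
      obtain ⟨j, _, hbj⟩ := hb
      have haI := hmemI i a hai
      have hbI := hmemI j b hbj
      rw [← hs2 a haI, ← hs2 b hbI, hab]
    refine ⟨(Finset.univ.biUnion G).image s, ?_, ?_, ?_⟩
    · intro x hx
      rw [Finset.coe_image] at hx
      obtain ⟨a, ha, rfl⟩ := hx
      rw [Finset.coe_biUnion] at ha
      simp only [mem_iUnion] at ha
      obtain ⟨i, _, hai⟩ := ha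
      exact hs1 a (hmemI i a hai)
    · intro x hx y hy hxy
      rw [Finset.mem_image] at hx hy
      obtain ⟨a, ha, rfl⟩ := hx
      obtain ⟨b, hb, rfl⟩ := hy
      rw [Finset.mem_biUnion] at ha hb
      obtain ⟨i, _, hai⟩ := ha
      obtain ⟨j, _, hbj⟩ := hb
      have haI := hmemI i a (by exact_mod_cast hai)
      have hbI := hmemI j b (by exact_mod_cast hbj)
      have hab : a ≠ b := fun h => hxy (by rw [h])
      by_cases hij : i = j
      · subst hij
        obtain ⟨k, hk1, hk2, hk3⟩ := hG2 i a hai b hbj hab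
        refine ⟨k+1, by omega, by omega, ?_⟩
        rw [Function.iterate_succ_apply, Function.iterate_succ_apply,
          hs2 a haI, hs2 b hbI]
        exact hk3
      · refine ⟨1, le_rfl, by omega, ?_⟩
        simp only [Function.iterate_one]
        rw [hs2 a haI, hs2 b hbI]
        rcases lt_or_gt_of_ne (fun h : (i:ℕ) = (j:ℕ) => hij (Fin.ext h)) with h | h
        · have := hgap i j h a b (by exact_mod_cast hai) (by exact_mod_cast hbj)
          exact le_abs.2 (Or.inr (by linarith))
        · have := hgap j i h b a (by exact_mod_cast hbj) (by exact_mod_cast hai)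
          exact le_abs.2 (Or.inl (by linarith))
    · rw [Finset.card_image_of_injOn hinj,
        Finset.card_biUnion (fun i _ j _ hij => hdisj i j hij)]
      calc M ^ (n+1) = M ^ n * M := pow_succ M n
        _ = ∑ _i : Fin M, M ^ n := by simp [Finset.sum_const, mul_comm]
        _ ≤ ∑ i, (G i).card := Finset.sum_le_sum (fun i _ => hG3 i)


private lemma pow_le_sepN {T : ℝ → ℝ} (hTc : ContinuousOn T (Icc 0 1))
    (hTm : MapsTo T (Icc 0 1) (Icc 0 1)) {C β ε : ℝ} (hC : 0 < C) (hε : 0 < ε)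
    (hε1 : ε ≤ 1)
    (hhyp : ∀ a b : ℝ, 0 ≤ a → a ≤ b → b ≤ 1 →
      C * (b - a) ^ β ≤ (volume (T '' Icc a b)).toReal)
    (n : ℕ) : ⌊C * ε ^ β / (2*ε)⌋₊ ^ n ≤ sepN (fun x y => |x - y|) T ε (n+1) := by
  obtain ⟨F, hF1, hF2, hF3⟩ := construct hTc hTm hC hε hhyp n 0 le_rfl (by linarith)
  refine hF3.trans (le_sepN hTm hε (n+1) F ?_ ?_)
  · refine hF1.trans (Icc_subset_Icc le_rfl (by linarith))
  · intro x hx y hy hxy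
    obtain ⟨j, hj1, hj2, hj3⟩ := hF2 x hx y hy hxy
    exact ⟨j, by omega, hj3⟩

private lemma limsup_ge {T : ℝ → ℝ} (hTc : ContinuousOn T (Icc 0 1))
    (hTm : MapsTo T (Icc 0 1) (Icc 0 1)) {C β ε : ℝ} (hC : 0 < C) (hε : 0 < ε)
    (hε1 : ε < 1) (hM1 : 1 ≤ ⌊C * ε ^ β / (2*ε)⌋₊)
    (hhyp : ∀ a b : ℝ, 0 ≤ a → a ≤ b → b ≤ 1 →
      C * (b - a) ^ β ≤ (volume (T '' Icc a b)).toReal) :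
    Real.log ⌊C * ε ^ β / (2*ε)⌋₊ / Real.log (1/ε) ≤
      limsup (fun n : ℕ => Real.log (sepN (fun x y => |x - y|) T ε n) / (n * Real.log (1/ε)))
        atTop := by
  set M := ⌊C * ε ^ β / (2*ε)⌋₊ with hMdef
  set L := Real.log (1/ε) with hL
  have hLpos : 0 < L := Real.log_pos (by rw [lt_div_iff₀ hε]; linarith)
  have hM1R : (1:ℝ) ≤ (M:ℝ) := by exact_mod_cast hM1
  have hlogM : 0 ≤ Real.log M := Real.log_nonneg hM1R
  set term : ℕ → ℝ :=
    fun n => Real.log (sepN (fun x y => |x - y|) T ε n) / (n * L) with hterm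
  -- upper bound for terms
  have hub : ∀ n : ℕ, term n ≤ Real.log (⌊1/ε⌋₊ + 1) / L := by
    intro n
    have hBnum : 0 ≤ Real.log (⌊1/ε⌋₊ + 1) := Real.log_nonneg (by push_cast; linarith [Nat.cast_nonneg (α := ℝ) ⌊1/ε⌋₊])
    rcases Nat.eq_zero_or_pos n with rfl | hn
    · simp only [hterm, Nat.cast_zero, zero_mul, div_zero]
      positivity
    · have h1 : (sepN (fun x y => |x - y|) T ε n : ℝ) ≤ ((⌊1/ε⌋₊ + 1) ^ n : ℕ) := by
        exact_mod_cast sepN_le hTm hε n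
      have h0 : (1:ℝ) ≤ (sepN (fun x y => |x - y|) T ε n : ℝ) := by
        exact_mod_cast one_le_sepN hTm hε n
      have h2 : Real.log (sepN (fun x y => |x - y|) T ε n) ≤ n * Real.log (⌊1/ε⌋₊ + 1) := by
        calc Real.log (sepN (fun x y => |x - y|) T ε n)
            ≤ Real.log ((⌊1/ε⌋₊ + 1) ^ n : ℕ) := Real.log_le_log (by linarith) h1
          _ = n * Real.log (⌊1/ε⌋₊ + 1) := by push_cast; rw [Real.log_pow]
      have hnL : 0 < (n:ℝ) * L := by
        have : (0:ℝ) < n := by exact_mod_cast hn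
        positivity
      rw [hterm, div_le_div_iff₀ hnL hLpos]
      calc Real.log (sepN (fun x y => |x - y|) T ε n) * L ≤ (n * Real.log (⌊1/ε⌋₊ + 1)) * L := by
            nlinarith
        _ = Real.log (⌊1/ε⌋₊ + 1) * (n * L) := by ring
  have hbdd : IsBoundedUnder (· ≤ ·) atTop term :=
    isBoundedUnder_of ⟨Real.log (⌊1/ε⌋₊ + 1) / L, hub⟩
  -- lower bound sequence
  set a : ℕ → ℝ := fun n => (1 - 1/(n:ℝ)) * (Real.log M / L) with ha
  have hatend : Tendsto a atTop (𝓝 (Real.log M / L)) := by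
    have h1 := (tendsto_const_nhds (x := (1:ℝ)) (f := atTop (α := ℕ))).sub
      tendsto_one_div_atTop_nhds_zero_nat
    have h2 := h1.mul (tendsto_const_nhds (x := Real.log M / L))
    rw [show ((1:ℝ) - 0) * (Real.log M / L) = Real.log M / L by ring] at h2
    exact h2
  have hale : ∀ᶠ n in atTop, a n ≤ term n := by
    filter_upwards [eventually_ge_atTop 1] with n hn
    have hn0 : (0:ℝ) < n := by exact_mod_cast hn
    have h1 : (M:ℝ) ^ (n-1) ≤ (sepN (fun x y => |x - y|) T ε n : ℝ) := by
      have := pow_le_sepN hTc hTm hC hε hε1.le hhyp (n-1)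
      rw [Nat.sub_add_cancel hn] at this
      exact_mod_cast this
    have hMpow : (1:ℝ) ≤ (M:ℝ) ^ (n-1) := one_le_pow₀ hM1R
    have h2 : ((n:ℝ) - 1) * Real.log M ≤ Real.log (sepN (fun x y => |x - y|) T ε n) := by
      calc ((n:ℝ) - 1) * Real.log M = ((n-1 : ℕ):ℝ) * Real.log M := by
            push_cast [Nat.cast_sub hn]; ring
        _ = Real.log ((M:ℝ) ^ (n-1)) := (Real.log_pow _ _).symm
        _ ≤ _ := Real.log_le_log (by linarith) h1
    have hnL : 0 < (n:ℝ) * L := by positivity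
    have haeq : (1 - 1/(n:ℝ)) * (Real.log M / L) = (((n:ℝ) - 1) * Real.log M) / ((n:ℝ) * L) := by
      field_simp
    calc a n = (((n:ℝ) - 1) * Real.log M) / ((n:ℝ) * L) := haeq
      _ ≤ Real.log (sepN (fun x y => |x - y|) T ε n) / ((n:ℝ) * L) :=
          div_le_div_of_nonneg_right h2 hnL.le
      _ = term n := rfl
  calc Real.log M / L = limsup a atTop := hatend.limsup_eq.symm
    _ ≤ limsup term atTop := limsup_le_limsup hale hatend.isCoboundedUnder_le hbdd


private lemma limsup_le_two {T : ℝ → ℝ} (hTm : MapsTo T (Icc 0 1) (Icc 0 1)) {ε : ℝ}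
    (hε : 0 < ε) (hε2 : ε ≤ 1/2) :
    limsup (fun n : ℕ => Real.log (sepN (fun x y => |x - y|) T ε n) / (n * Real.log (1/ε)))
      atTop ≤ 2 := by
  have hε1 : ε < 1 := by linarith
  set L := Real.log (1/ε) with hL
  have hLpos : 0 < L := Real.log_pos (by rw [lt_div_iff₀ hε]; linarith)
  have hfloor : (⌊1/ε⌋₊ : ℝ) ≤ 1/ε := Nat.floor_le (by positivity)
  have hinv1 : (1:ℝ) ≤ 1/ε := by rw [le_div_iff₀ hε]; linarith
  have hlog2 : Real.log ((⌊1/ε⌋₊ : ℝ) + 1) ≤ 2 * L := by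
    calc Real.log ((⌊1/ε⌋₊ : ℝ) + 1) ≤ Real.log (2 * (1/ε)) :=
          Real.log_le_log (by positivity) (by linarith)
      _ = Real.log 2 + L := by rw [Real.log_mul two_ne_zero (by positivity)]
      _ ≤ L + L := by
          have : Real.log 2 ≤ L := Real.log_le_log (by norm_num) (by rw [le_div_iff₀ hε]; linarith)
          linarith
      _ = 2 * L := by ring
  have hnonneg : ∀ n : ℕ, 0 ≤ Real.log (sepN (fun x y => |x - y|) T ε n) / (n * L) := by
    intro n
    have h0 : (1:ℝ) ≤ (sepN (fun x y => |x - y|) T ε n : ℝ) := by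
      exact_mod_cast one_le_sepN hTm hε n
    have : 0 ≤ Real.log (sepN (fun x y => |x - y|) T ε n) := Real.log_nonneg h0
    positivity
  have hub : ∀ n : ℕ, Real.log (sepN (fun x y => |x - y|) T ε n) / (n * L) ≤ 2 := by
    intro n
    rcases Nat.eq_zero_or_pos n with rfl | hn
    · simp
    · have h1 : (sepN (fun x y => |x - y|) T ε n : ℝ) ≤ ((⌊1/ε⌋₊ + 1) ^ n : ℕ) := by
        exact_mod_cast sepN_le hTm hε n
      have h0 : (1:ℝ) ≤ (sepN (fun x y => |x - y|) T ε n : ℝ) := by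
        exact_mod_cast one_le_sepN hTm hε n
      have h2 : Real.log (sepN (fun x y => |x - y|) T ε n) ≤ n * (2 * L) := by
        calc Real.log (sepN (fun x y => |x - y|) T ε n)
            ≤ Real.log ((⌊1/ε⌋₊ + 1) ^ n : ℕ) := Real.log_le_log (by linarith) h1
          _ = n * Real.log ((⌊1/ε⌋₊:ℝ) + 1) := by push_cast; rw [Real.log_pow]
          _ ≤ n * (2 * L) := by
              have : (0:ℝ) ≤ n := Nat.cast_nonneg n
              nlinarith
      have hnpos : (0:ℝ) < n := by exact_mod_cast hn
      rw [div_le_iff₀ (by positivity)]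
      nlinarith
  refine limsup_le_of_le ?_ (Eventually.of_forall hub)
  exact (isBoundedUnder_of ⟨0, fun n => hnonneg n⟩ :
    IsBoundedUnder (· ≥ ·) atTop _).isCoboundedUnder_le

/-- A β-hypersensitive interval map has metric mean dimension at least 1-β
relative to the Euclidean metric. -/
theorem hypersensitive_mdim (T : ℝ → ℝ)
    (hTc : ContinuousOn T (Icc 0 1)) (hTm : MapsTo T (Icc 0 1) (Icc 0 1))
    (β : ℝ) (hβ : β ∈ Ioo (0:ℝ) 1)
    (hhyp : ∃ C : ℝ, 0 < C ∧ ∀ a b : ℝ, 0 ≤ a → a ≤ b → b ≤ 1 →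
      C * (b - a) ^ β ≤ (MeasureTheory.volume (T '' Icc a b)).toReal) :
    1 - β ≤ mdimM T (fun x y => |x - y|) := by
  obtain ⟨hβ0, hβ1⟩ := hβ
  obtain ⟨C, hC, hhyp⟩ := hhyp
  set g : ℝ → ℝ := fun ε =>
    limsup (fun n : ℕ => Real.log (sepN (fun x y => |x - y|) T ε n) / (n * Real.log (1/ε)))
      atTop with hg
  have hmdim : mdimM T (fun x y => |x - y|) = liminf g (𝓝[>] (0:ℝ)) := rfl
  set h : ℝ → ℝ := fun ε => Real.log (C/4) / Real.log (1/ε) + (1 - β) with hh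
  have hinv : Tendsto (fun ε : ℝ => 1/ε) (𝓝[>] (0:ℝ)) atTop := by
    simpa [one_div] using tendsto_inv_nhdsGT_zero (𝕜 := ℝ)
  have hlogtop : Tendsto (fun ε : ℝ => Real.log (1/ε)) (𝓝[>] (0:ℝ)) atTop :=
    Real.tendsto_log_atTop.comp hinv
  have htendh : Tendsto h (𝓝[>] (0:ℝ)) (𝓝 (1 - β)) := by
    have h1 : Tendsto (fun ε : ℝ => Real.log (C/4) / Real.log (1/ε)) (𝓝[>] (0:ℝ)) (𝓝 0) :=
      Tendsto.div_atTop tendsto_const_nhds hlogtop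
    have h2 := h1.add (tendsto_const_nhds (x := 1 - β))
    rw [zero_add] at h2
    exact h2
  have hrptop : Tendsto (fun ε : ℝ => (1/ε) ^ (1-β)) (𝓝[>] (0:ℝ)) atTop :=
    (tendsto_rpow_atTop (by linarith)).comp hinv
  have hev4 : ∀ᶠ ε in 𝓝[>] (0:ℝ), 4 / C ≤ (1/ε) ^ (1-β) := hrptop.eventually_ge_atTop _
  have hev1 : ∀ᶠ ε in 𝓝[>] (0:ℝ), ε ∈ Ioo (0:ℝ) (1/2) :=
    Ioo_mem_nhdsGT_of_mem (by norm_num)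
  have hle : ∀ᶠ ε in 𝓝[>] (0:ℝ), h ε ≤ g ε := by
    filter_upwards [hev4, hev1] with ε h4 h12
    obtain ⟨hε0, hε12⟩ := h12
    have hε1 : ε < 1 := by linarith
    set L := Real.log (1/ε) with hLdef
    have hLpos : 0 < L := Real.log_pos (by rw [lt_div_iff₀ hε0]; linarith)
    have hεβ : 0 < ε ^ (β-1) := Real.rpow_pos_of_pos hε0 _
    have hpow : (1/ε) ^ (1-β) = ε ^ (β-1) := by
      rw [one_div, ← Real.rpow_neg_one ε, ← Real.rpow_mul hε0.le]
      congr 1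
      ring
    have hx : C * ε ^ β / (2*ε) = (C/2) * ε ^ (β-1) := by
      rw [Real.rpow_sub hε0, Real.rpow_one]; ring
    have hxge2 : (2:ℝ) ≤ C * ε ^ β / (2*ε) := by
      rw [hx, ← hpow]
      have h5 : (C/2) * (4/C) ≤ (C/2) * ((1/ε) ^ (1-β)) :=
        mul_le_mul_of_nonneg_left h4 (by positivity)
      have h6 : (C/2) * (4/C) = 2 := by field_simp; ring
      linarith
    set M := ⌊C * ε ^ β / (2*ε)⌋₊ with hMdef
    have hM2 : 2 ≤ M := Nat.le_floor (by exact_mod_cast hxge2)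
    have hM1 : 1 ≤ M := by omega
    have hMlow : C * ε ^ β / (2*ε) / 2 ≤ (M:ℝ) := by
      have := Nat.sub_one_lt_floor (C * ε ^ β / (2*ε))
      linarith
    have hlogM : Real.log (C/4) + (1-β) * L ≤ Real.log M := by
      have hhalf : C * ε ^ β / (2*ε) / 2 = (C/4) * ε ^ (β-1) := by rw [hx]; ring
      have h7 : Real.log ((C/4) * ε ^ (β-1)) ≤ Real.log M := by
        refine Real.log_le_log (by positivity) ?_
        rw [← hhalf]; exact hMlow
      have h8 : Real.log ((C/4) * ε ^ (β-1)) = Real.log (C/4) + (β-1) * Real.log ε := by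
        rw [Real.log_mul (by positivity) (ne_of_gt hεβ), Real.log_rpow hε0]
      have h9 : L = -Real.log ε := by rw [hLdef, one_div, Real.log_inv]
      rw [h8] at h7
      have : (1-β) * L = (β-1) * Real.log ε := by rw [h9]; ring
      linarith
    have hfinal : h ε ≤ Real.log M / L := by
      have : h ε = (Real.log (C/4) + (1-β) * L) / L := by
        rw [hh]
        simp only []
        rw [add_div, mul_div_assoc, div_self (ne_of_gt hLpos), mul_one]
      rw [this]
      exact div_le_div_of_nonneg_right hlogM hLpos.le
    exact hfinal.trans (limsup_ge hTc hTm hC hε0 hε1 hM1 hhyp)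
  have hgub : ∀ᶠ ε in 𝓝[>] (0:ℝ), g ε ≤ 2 := by
    filter_upwards [hev1] with ε h12
    exact limsup_le_two hTm h12.1 h12.2.le
  have hcob : IsCoboundedUnder (· ≥ ·) (𝓝[>] (0:ℝ)) g :=
    isCoboundedUnder_ge_of_eventually_le _ hgub
  rw [hmdim]
  calc 1 - β = liminf h (𝓝[>] (0:ℝ)) := htendh.liminf_eq.symm
    _ ≤ liminf g (𝓝[>] (0:ℝ)) := liminf_le_liminf hle htendh.isBoundedUnder_ge hcob
end

section
/- Let s = (s_n)_{n≥1} be any sequence in (0,1/2)^ℕ. Define Ψ^α on the space C⁰₀ of continuous increasing surjections of [0,1] fixing 0 and 1 piecewise via the four affine pairs (H^α_i, V^α_i). Then the sequence h^n = Ψ^{s_1}∘…∘Ψ^{s_n}(Id) converges uniformly, and its limit h is a homeomorphism of [0,1] onto itself. -/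
/-!
Since `V^α_i = H^{1-α}_i`, the operator `Ψ^α` satisfies `Ψ^α f ∘ H^α_i = H^{1-α}_i ∘ f` on `[0,1]`.
Hence if `g ∘ f = id` on `[0,1]` then `Ψ^{1-α} g ∘ Ψ^α f = id` there, so the maps `h^n` built
from the parameters `1 - s_k` invert those built from `s_k`. Every `H^α_i` is a
`1/2`-contraction, so `Ψ^α` halves uniform distances and both sequences converge uniformly; their
limits are continuous and mutually inverse on `[0,1]`. A continuous injection of
`[0,1]` with `h 0 ≤ h 1` is strictly increasing.
-/

open Set Filter

/-- The four-piece operator Ψ^α acting on functions, defined piecewise via the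
affine pairs (H^α_i, V^α_i). -/
noncomputable def zipPsi (α : ℝ) (f : ℝ → ℝ) : ℝ → ℝ := fun x =>
  if x ≤ α / 2 then (1 - α) / 2 * f (2 * x / α)
  else if x ≤ 1 / 2 then (1 - α) / 2 + α / 2 * f ((2 * x - α) / (1 - α))
  else if x ≤ (1 + α) / 2 then 1 / 2 + (1 - α) / 2 * f ((2 * x - 1) / α)
  else 1 - α / 2 + α / 2 * f ((2 * x - (1 + α)) / (1 - α))

/-- h^n = Ψ^{s 0} ∘ … ∘ Ψ^{s (n-1)} applied to the identity. -/
noncomputable def zipHseq (s : ℕ → ℝ) : ℕ → (ℝ → ℝ)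
  | 0 => id
  | n + 1 => zipPsi (s 0) (zipHseq (fun i => s (i + 1)) n)

section UniformLimit

variable {α β ι : Type*}

theorem exists_tendstoUniformlyOn_of_dist_le_geometric [PseudoMetricSpace β] [CompleteSpace β]
    {F : ℕ → α → β} {s : Set α} {C r : ℝ} (hr₀ : 0 ≤ r) (hr : r < 1)
    (hF : ∀ n, ∀ x ∈ s, dist (F n x) (F (n + 1) x) ≤ C * r ^ n) :
    ∃ f, TendstoUniformlyOn F f atTop s := by
  cases isEmpty_or_nonempty α
  · exact ⟨F 0, s.eq_empty_of_isEmpty ▸ tendstoUniformlyOn_empty⟩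
  have : Nonempty β := Nonempty.map (F 0) ‹_›
  choose! f hf using fun x hx =>
    cauchySeq_tendsto_of_complete (cauchySeq_of_le_geometric r C hr fun n => hF n x hx)
  have hbound : Tendsto (fun n => C * r ^ n / (1 - r)) atTop (nhds 0) := by
    simpa using ((tendsto_pow_atTop_nhds_zero_of_lt_one hr₀ hr).const_mul C).div_const (1 - r)
  refine ⟨f, Metric.tendstoUniformlyOn_iff.2 fun ε hε => ?_⟩
  filter_upwards [hbound.eventually (gt_mem_nhds hε)] with n hn x hx
  rw [dist_comm]
  exact (dist_le_of_le_geometric_of_tendsto r C hr (fun k => hF k x hx) (hf x hx) n).trans_lt hn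

theorem mapsTo_of_tendsto_of_isClosed [TopologicalSpace β] {p : Filter ι} [p.NeBot]
    {F : ι → α → β} {f : α → β} {s : Set α} {t : Set β}
    (hF : ∀ x ∈ s, Tendsto (fun n => F n x) p (nhds (f x))) (ht : IsClosed t)
    (hmaps : ∀ n, MapsTo (F n) s t) : MapsTo f s t := fun _ hx =>
  ht.mem_of_tendsto (hF _ hx) (Eventually.of_forall fun n => hmaps n hx)

theorem leftInvOn_of_tendstoUniformlyOn [TopologicalSpace β] [UniformSpace α] [T2Space α]
    {p : Filter ι} [p.NeBot] {F : ι → α → β} {G : ι → β → α} {f : α → β} {g : β → α}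
    {s : Set α} {t : Set β} (hF : ∀ x ∈ s, Tendsto (fun n => F n x) p (nhds (f x)))
    (hG : TendstoUniformlyOn G g p t) (ht : IsClosed t) (hg : ContinuousOn g t)
    (hmaps : ∀ n, MapsTo (F n) s t) (hinv : ∀ n, LeftInvOn (G n) (F n) s) :
    LeftInvOn g f s := by
  intro x hx
  have hFx : Tendsto (fun n => F n x) p (nhdsWithin (f x) t) :=
    tendsto_nhdsWithin_iff.2 ⟨hF x hx, Eventually.of_forall fun n => hmaps n hx⟩
  have hlim := hG.tendsto_comp (hg _ (mapsTo_of_tendsto_of_isClosed hF ht hmaps hx)) hFx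
  simp only [hinv _ hx] at hlim
  exact tendsto_nhds_unique hlim tendsto_const_nhds

end UniformLimit

theorem one_sub_mem_Ioo {α : ℝ} (hα : α ∈ Ioo 0 1) : 1 - α ∈ Ioo 0 1 :=
  ⟨sub_pos.2 hα.2, sub_lt_self 1 hα.1⟩

noncomputable def zipH (α : ℝ) : Fin 4 → ℝ → ℝ
  | 0, t => α / 2 * t
  | 1, t => (1 - α) / 2 * t + α / 2
  | 2, t => α / 2 * t + 1 / 2
  | 3, t => (1 - α) / 2 * t + (1 + α) / 2

section Pieces

variable {α : ℝ}

theorem zipH_succ_zero (α : ℝ) (j : Fin 3) : zipH α j.succ 0 = zipH α j.castSucc 1 := by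
  fin_cases j <;> simp only [Fin.reduceFinMk, Fin.reduceSucc, Fin.reduceCastSucc, zipH] <;> ring

theorem zipH_mapsTo (hα : α ∈ Icc 0 1) (i : Fin 4) : MapsTo (zipH α i) (Icc 0 1) (Icc 0 1) := by
  obtain ⟨hα0, hα1⟩ := hα
  rintro t ⟨ht0, ht1⟩
  fin_cases i <;> simp only [zipH] <;> constructor <;> nlinarith

theorem abs_zipH_sub_le (hα : α ∈ Icc 0 1) (i : Fin 4) (a b : ℝ) :
    |zipH α i a - zipH α i b| ≤ |a - b| / 2 := by
  obtain ⟨hα0, hα1⟩ := hα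
  set c := zipH α i 1 - zipH α i 0
  have hsub : zipH α i a - zipH α i b = c * (a - b) := by
    fin_cases i <;> simp only [c, zipH] <;> ring
  have hc : 0 ≤ c ∧ c ≤ 1 / 2 := by
    fin_cases i <;> simp only [c, zipH] <;> constructor <;> linarith
  rw [hsub, abs_mul, abs_of_nonneg hc.1]
  nlinarith [abs_nonneg (a - b)]

theorem exists_zipH_eq (hα : α ∈ Ioo 0 1) {x : ℝ} (hx : x ∈ Icc 0 1) :
    ∃ i, ∃ t ∈ Icc (0 : ℝ) 1, zipH α i t = x := by
  obtain ⟨hα0, hα1⟩ := hα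
  obtain ⟨hx0, hx1⟩ := hx
  have hα' : 0 < 1 - α := by linarith
  rcases le_total x (α / 2) with h1 | h1
  · refine ⟨0, 2 * x / α, ⟨by positivity, ?_⟩, by simp only [zipH]; field_simp⟩
    rw [div_le_one hα0]; linarith
  rcases le_total x (1 / 2) with h2 | h2
  · refine ⟨1, (2 * x - α) / (1 - α), ⟨div_nonneg (by linarith) hα'.le, ?_⟩, ?_⟩
    · rw [div_le_one hα']; linarith
    · simp only [zipH]; field_simp; ring
  rcases le_total x ((1 + α) / 2) with h3 | h3
  · refine ⟨2, (2 * x - 1) / α, ⟨div_nonneg (by linarith) hα0.le, ?_⟩, ?_⟩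
    · rw [div_le_one hα0]; linarith
    · simp only [zipH]; field_simp; ring
  · refine ⟨3, (2 * x - (1 + α)) / (1 - α), ⟨div_nonneg (by linarith) hα'.le, ?_⟩, ?_⟩
    · rw [div_le_one hα']; linarith
    · simp only [zipH]; field_simp; ring

end Pieces

section Psi

variable {α : ℝ} {f g : ℝ → ℝ}

theorem zipPsi_apply_zero (hα : 0 ≤ α) (hf0 : f 0 = 0) : zipPsi α f 0 = 0 := by
  rw [zipPsi, if_pos (by linarith), mul_zero, zero_div, hf0, mul_zero]

theorem zipPsi_apply_one (hα : α < 1) (hf1 : f 1 = 1) : zipPsi α f 1 = 1 := by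
  have hα' : 1 - α ≠ 0 := by linarith
  rw [zipPsi, if_neg (by linarith), if_neg (by norm_num), if_neg (by linarith),
    show (2 * 1 - (1 + α)) / (1 - α) = 1 by field_simp; ring, hf1]
  ring

theorem zipPsi_zipH_of_pos (hα : α ∈ Ioo 0 1) (i : Fin 4) {t : ℝ} (ht : t ∈ Ioc 0 1) :
    zipPsi α f (zipH α i t) = zipH (1 - α) i (f t) := by
  obtain ⟨hα0, hα1⟩ := hα
  obtain ⟨ht0, ht1⟩ := ht
  have : 1 - α ≠ 0 := by linarith
  fin_cases i <;> simp only [zipH] <;> unfold zipPsi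
  · rw [if_pos (by nlinarith), show 2 * (α / 2 * t) / α = t by field_simp]
  · rw [if_neg (by nlinarith), if_pos (by nlinarith),
      show (2 * ((1 - α) / 2 * t + α / 2) - α) / (1 - α) = t by field_simp; ring]
    ring
  · rw [if_neg (by nlinarith), if_neg (by nlinarith), if_pos (by nlinarith),
      show (2 * (α / 2 * t + 1 / 2) - 1) / α = t by field_simp; ring]
    ring
  · rw [if_neg (by nlinarith), if_neg (by nlinarith), if_neg (by nlinarith),
      show (2 * ((1 - α) / 2 * t + (1 + α) / 2) - (1 + α)) / (1 - α) = t by field_simp; ring]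
    ring

theorem zipPsi_zipH (hα : α ∈ Ioo 0 1) (hf0 : f 0 = 0) (hf1 : f 1 = 1) (i : Fin 4) {t : ℝ}
    (ht : t ∈ Icc 0 1) : zipPsi α f (zipH α i t) = zipH (1 - α) i (f t) := by
  rcases ht.1.eq_or_lt with rfl | ht0
  · induction i using Fin.cases with
    | zero => simp [zipH, zipPsi_apply_zero hα.1.le hf0, hf0]
    | succ j =>
      rw [zipH_succ_zero, zipPsi_zipH_of_pos hα _ ⟨one_pos, le_rfl⟩, hf0, hf1, zipH_succ_zero]
  · exact zipPsi_zipH_of_pos hα i ⟨ht0, ht.2⟩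

theorem zipPsi_mapsTo (hα : α ∈ Ioo 0 1) (hf0 : f 0 = 0) (hf1 : f 1 = 1)
    (hf : MapsTo f (Icc 0 1) (Icc 0 1)) : MapsTo (zipPsi α f) (Icc 0 1) (Icc 0 1) := by
  intro x hx
  obtain ⟨i, t, ht, rfl⟩ := exists_zipH_eq hα hx
  rw [zipPsi_zipH hα hf0 hf1 i ht]
  exact zipH_mapsTo (Ioo_subset_Icc_self (one_sub_mem_Ioo hα)) i (hf ht)

theorem zipPsi_leftInvOn (hα : α ∈ Ioo 0 1) (hf0 : f 0 = 0) (hf1 : f 1 = 1)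
    (hg0 : g 0 = 0) (hg1 : g 1 = 1) (hf : MapsTo f (Icc 0 1) (Icc 0 1))
    (hgf : LeftInvOn g f (Icc 0 1)) :
    LeftInvOn (zipPsi (1 - α) g) (zipPsi α f) (Icc 0 1) := by
  intro x hx
  obtain ⟨i, t, ht, rfl⟩ := exists_zipH_eq hα hx
  rw [zipPsi_zipH hα hf0 hf1 i ht, zipPsi_zipH (one_sub_mem_Ioo hα) hg0 hg1 i (hf ht),
    sub_sub_cancel, hgf ht]

theorem abs_zipPsi_sub_le (hα : α ∈ Ioo 0 1) (hf0 : f 0 = 0) (hf1 : f 1 = 1)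
    (hg0 : g 0 = 0) (hg1 : g 1 = 1) {d : ℝ} (hd : ∀ t ∈ Icc (0 : ℝ) 1, |f t - g t| ≤ d) :
    ∀ x ∈ Icc (0 : ℝ) 1, |zipPsi α f x - zipPsi α g x| ≤ d / 2 := by
  intro x hx
  obtain ⟨i, t, ht, rfl⟩ := exists_zipH_eq hα hx
  rw [zipPsi_zipH hα hf0 hf1 i ht, zipPsi_zipH hα hg0 hg1 i ht]
  have := abs_zipH_sub_le (Ioo_subset_Icc_self (one_sub_mem_Ioo hα)) i (f t) (g t)
  linarith [hd t ht]

theorem zipPsi_continuous (hα : α ∈ Ioo 0 1) (hf : Continuous f) (hf0 : f 0 = 0)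
    (hf1 : f 1 = 1) : Continuous (zipPsi α f) := by
  obtain ⟨hα0, hα1⟩ := hα
  have hα_ne : α ≠ 0 := hα0.ne'
  have hα_ne' : 1 - α ≠ 0 := by linarith
  refine Continuous.if_le (by fun_prop) (Continuous.if_le (by fun_prop)
    (Continuous.if_le (by fun_prop) (by fun_prop) continuous_id continuous_const ?_)
    continuous_id continuous_const ?_) continuous_id continuous_const ?_
  · rintro x rfl
    rw [show (2 * ((1 + α) / 2) - 1) / α = 1 by field_simp; ring,
      show (2 * ((1 + α) / 2) - (1 + α)) / (1 - α) = 0 by field_simp; ring, hf0, hf1]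
    ring
  · rintro x rfl
    rw [if_pos (by linarith), show (2 * (1 / 2) - α) / (1 - α) = 1 by field_simp,
      show (2 * (1 / 2) - 1) / α = 0 by field_simp; ring, hf0, hf1]
    ring
  · rintro x rfl
    rw [if_pos (by linarith), show 2 * (α / 2) / α = 1 by field_simp,
      show (2 * (α / 2) - α) / (1 - α) = 0 by field_simp; ring, hf0, hf1]
    ring

end Psi

section Sequence

variable {s : ℕ → ℝ}

theorem zipHseq_apply_zero (hs : ∀ n, s n ∈ Ioo 0 1) (n : ℕ) : zipHseq s n 0 = 0 := by
  induction n generalizing s with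
  | zero => rfl
  | succ n ih => exact zipPsi_apply_zero (hs 0).1.le (ih fun k => hs (k + 1))

theorem zipHseq_apply_one (hs : ∀ n, s n ∈ Ioo 0 1) (n : ℕ) : zipHseq s n 1 = 1 := by
  induction n generalizing s with
  | zero => rfl
  | succ n ih => exact zipPsi_apply_one (hs 0).2 (ih fun k => hs (k + 1))

theorem zipHseq_mapsTo (hs : ∀ n, s n ∈ Ioo 0 1) (n : ℕ) :
    MapsTo (zipHseq s n) (Icc 0 1) (Icc 0 1) := by
  induction n generalizing s with
  | zero => exact mapsTo_id _
  | succ n ih =>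
    have hs' : ∀ k, s (k + 1) ∈ Ioo 0 1 := fun k => hs (k + 1)
    exact zipPsi_mapsTo (hs 0) (zipHseq_apply_zero hs' n) (zipHseq_apply_one hs' n) (ih hs')

theorem zipHseq_continuous (hs : ∀ n, s n ∈ Ioo 0 1) (n : ℕ) : Continuous (zipHseq s n) := by
  induction n generalizing s with
  | zero => exact continuous_id
  | succ n ih =>
    have hs' : ∀ k, s (k + 1) ∈ Ioo 0 1 := fun k => hs (k + 1)
    exact zipPsi_continuous (hs 0) (ih hs') (zipHseq_apply_zero hs' n) (zipHseq_apply_one hs' n)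

theorem zipHseq_leftInvOn (hs : ∀ n, s n ∈ Ioo 0 1) (n : ℕ) :
    LeftInvOn (zipHseq (fun k => 1 - s k) n) (zipHseq s n) (Icc 0 1) := by
  induction n generalizing s with
  | zero => exact fun _ _ => rfl
  | succ n ih =>
    have hs' : ∀ k, s (k + 1) ∈ Ioo 0 1 := fun k => hs (k + 1)
    have hs'' : ∀ k, 1 - s (k + 1) ∈ Ioo 0 1 := fun k => one_sub_mem_Ioo (hs (k + 1))
    exact zipPsi_leftInvOn (hs 0) (zipHseq_apply_zero hs' n) (zipHseq_apply_one hs' n)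
      (zipHseq_apply_zero hs'' n) (zipHseq_apply_one hs'' n) (zipHseq_mapsTo hs' n) (ih hs')

theorem abs_zipHseq_sub_succ_le (hs : ∀ n, s n ∈ Ioo 0 1) (n : ℕ) :
    ∀ x ∈ Icc (0 : ℝ) 1, |zipHseq s n x - zipHseq s (n + 1) x| ≤ (1 / 2) ^ n := by
  induction n generalizing s with
  | zero =>
    intro x hx
    have hx' := zipHseq_mapsTo hs 1 hx
    rw [pow_zero]
    exact abs_sub_le_of_nonneg_of_le hx.1 hx.2 hx'.1 hx'.2
  | succ n ih =>
    have hs' : ∀ k, s (k + 1) ∈ Ioo 0 1 := fun k => hs (k + 1)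
    intro x hx
    rw [pow_succ, ← div_eq_mul_one_div]
    exact abs_zipPsi_sub_le (hs 0) (zipHseq_apply_zero hs' n) (zipHseq_apply_one hs' n)
      (zipHseq_apply_zero hs' (n + 1)) (zipHseq_apply_one hs' (n + 1)) (ih hs') x hx

theorem exists_tendstoUniformlyOn_zipHseq (hs : ∀ n, s n ∈ Ioo 0 1) :
    ∃ h, TendstoUniformlyOn (zipHseq s) h atTop (Icc 0 1) :=
  exists_tendstoUniformlyOn_of_dist_le_geometric (C := 1) (r := 1 / 2) (by norm_num)
    (by norm_num) fun n x hx => by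
      simpa only [Real.dist_eq, one_mul] using abs_zipHseq_sub_succ_le hs n x hx

end Sequence

section Limit

variable {s : ℕ → ℝ} {h g : ℝ → ℝ}

theorem continuousOn_of_tendstoUniformlyOn_zipHseq (hs : ∀ n, s n ∈ Ioo 0 1)
    (hh : TendstoUniformlyOn (zipHseq s) h atTop (Icc 0 1)) : ContinuousOn h (Icc 0 1) :=
  hh.continuousOn (Frequently.of_forall fun n => (zipHseq_continuous hs n).continuousOn)

theorem mapsTo_of_tendstoUniformlyOn_zipHseq (hs : ∀ n, s n ∈ Ioo 0 1)
    (hh : TendstoUniformlyOn (zipHseq s) h atTop (Icc 0 1)) : MapsTo h (Icc 0 1) (Icc 0 1) :=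
  mapsTo_of_tendsto_of_isClosed (fun _ hx => hh.tendsto_at hx) isClosed_Icc (zipHseq_mapsTo hs)

theorem leftInvOn_of_tendstoUniformlyOn_zipHseq (hs : ∀ n, s n ∈ Ioo 0 1)
    (hh : TendstoUniformlyOn (zipHseq s) h atTop (Icc 0 1))
    (hg : TendstoUniformlyOn (zipHseq fun k => 1 - s k) g atTop (Icc 0 1)) :
    LeftInvOn g h (Icc 0 1) :=
  leftInvOn_of_tendstoUniformlyOn (fun _ hx => hh.tendsto_at hx) hg isClosed_Icc
    (continuousOn_of_tendstoUniformlyOn_zipHseq (fun n => one_sub_mem_Ioo (hs n)) hg)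
    (zipHseq_mapsTo hs) (zipHseq_leftInvOn hs)

end Limit

/-- The maps h^n converge uniformly on [0,1] to a homeomorphism h of [0,1]. -/
theorem zipHseq_limit_homeo (s : ℕ → ℝ) (hs : ∀ n, s n ∈ Ioo (0:ℝ) (1 / 2)) :
    ∃ h : ℝ → ℝ,
      TendstoUniformlyOn (fun n => zipHseq s n) h atTop (Icc 0 1) ∧
      ContinuousOn h (Icc 0 1) ∧ BijOn h (Icc 0 1) (Icc 0 1) ∧
      StrictMonoOn h (Icc 0 1) := by
  have hs₁ : ∀ n, s n ∈ Ioo (0 : ℝ) 1 := fun n => Ioo_subset_Ioo_right (by norm_num) (hs n)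
  have hs₂ : ∀ n, 1 - s n ∈ Ioo (0 : ℝ) 1 := fun n => one_sub_mem_Ioo (hs₁ n)
  obtain ⟨h, hh⟩ := exists_tendstoUniformlyOn_zipHseq hs₁
  obtain ⟨g, hg⟩ := exists_tendstoUniformlyOn_zipHseq hs₂
  have hinv : InvOn g h (Icc 0 1) (Icc 0 1) :=
    ⟨leftInvOn_of_tendstoUniformlyOn_zipHseq hs₁ hh hg,
      leftInvOn_of_tendstoUniformlyOn_zipHseq hs₂ hg (by simpa only [sub_sub_cancel] using hh)⟩
  have hcont := continuousOn_of_tendstoUniformlyOn_zipHseq hs₁ hh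
  have h01 : h 0 ≤ h 1 :=
    le_of_tendsto_of_tendsto' (hh.tendsto_at (left_mem_Icc.2 zero_le_one))
      (hh.tendsto_at (right_mem_Icc.2 zero_le_one)) fun n => by
        rw [zipHseq_apply_zero hs₁, zipHseq_apply_one hs₁]; exact zero_le_one
  exact ⟨h, hh, hcont,
    hinv.bijOn (mapsTo_of_tendstoUniformlyOn_zipHseq hs₁ hh)
      (mapsTo_of_tendstoUniformlyOn_zipHseq hs₂ hg),
    hcont.strictMonoOn_of_injOn_Icc zero_le_one h01 hinv.1.injOn⟩
end
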